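/- arXiv:2507.02896 — 4 statements merged into one kernel-verified Lean document; each statement's English description precedes it below -/
import Mathlib

section
/- Let F be the midpoint of segment BC, G the orthogonal projection of C onto line AB, and θ = ∠ B A C. Then the central angles of the circle on diameter BC satisfy ∠ B F G = 2θ and ∠ C F G = π − 2θ. -/
open EuclideanGeometry RealInnerProductSpace Real

/-! By Thales' theorem the foot `G` of the altitude from the right angle lies on the circle with
diameter `BC`, so triangle `BFG` is isosceles with apex `F`. The angle at `B` is acute, so `G` lies
on the ray `BA` and the base angle `∠ F B G` equals `∠ A B C = π / 2 - θ`; hence the apex angle is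
`2θ`, and `∠ C F G` is its supplement. -/

namespace InnerProductGeometry

variable {V : Type*} [NormedAddCommGroup V] [InnerProductSpace ℝ V]

theorem inner_pos_of_angle_lt_pi_div_two {x y : V} (h : angle x y < π / 2) : 0 < ⟪x, y⟫ := by
  rw [angle, arccos_lt_pi_div_two] at h
  exact pos_of_mul_pos_left (by simpa [div_eq_mul_inv] using h) (by positivity)

theorem angle_starProjection_span_singleton_left {v w : V} (h : angle v w < π / 2) :
    angle ((ℝ ∙ v).starProjection w) w = angle v w := by
  have hinner := inner_pos_of_angle_lt_pi_div_two h
  have hv : v ≠ 0 := by rintro rfl; simp at hinner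
  rw [Submodule.starProjection_singleton]
  exact angle_smul_left_of_pos _ _ (by simp only [RCLike.ofReal_real_eq_id, id]; positivity)

end InnerProductGeometry

namespace EuclideanGeometry

variable {V P : Type*} [NormedAddCommGroup V] [InnerProductSpace ℝ V] [MetricSpace P]
  [NormedAddTorsor V P]

theorem angle_orthogonalProjection_line_left {a b c : P} (h : ∠ a b c < π / 2) :
    ∠ (orthogonalProjection line[ℝ, a, b] c : P) b c = ∠ a b c := by
  have hb : b ∈ line[ℝ, a, b] := right_mem_affineSpan_pair ℝ a b
  rw [angle, orthogonalProjection_apply_mem _ hb, vadd_vsub,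
    Submodule.coe_orthogonalProjectionOnto_apply]
  simp only [direction_affineSpan, vectorSpan_pair]
  exact InnerProductGeometry.angle_starProjection_span_singleton_left h

theorem dist_midpoint_eq_of_angle_eq_pi_div_two {p₁ p₂ p₃ : P} (h : ∠ p₁ p₂ p₃ = π / 2) :
    dist p₂ (midpoint ℝ p₁ p₃) = dist p₁ (midpoint ℝ p₁ p₃) := by
  have hp₁ := (Sphere.isDiameter_ofDiameter p₁ p₃).left_mem
  have hp₂ := Sphere.angle_eq_pi_div_two_iff_mem_sphere_ofDiameter.1 h
  exact (mem_sphere.1 hp₂).trans (mem_sphere.1 hp₁).symm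

theorem angle_eq_pi_sub_two_mul_angle_of_dist_eq {p₁ p₂ p₃ : P} (h : dist p₁ p₂ = dist p₁ p₃)
    (hne : p₂ ≠ p₁) : ∠ p₂ p₁ p₃ = π - 2 * ∠ p₁ p₂ p₃ := by
  have hsum := angle_add_angle_add_angle_eq_pi p₃ hne
  have hiso := angle_eq_angle_of_dist_eq h
  rw [angle_comm p₂ p₃ p₁, ← hiso, angle_comm p₃ p₁ p₂] at hsum
  linarith

end EuclideanGeometry

theorem central_angles_circle_F
    (A B C G F : EuclideanSpace ℝ (Fin 2))
    (hC : ∠ A C B = Real.pi / 2)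
    (ha : 0 < dist B C) (hb : 0 < dist A C)
    (hG : G = EuclideanGeometry.orthogonalProjection (affineSpan ℝ {A, B}) C)
    (hF : F = midpoint ℝ B C)
    (θ : ℝ) (hθ : θ = ∠ B A C) :
    ∠ B F G = 2 * θ ∧ ∠ C F G = Real.pi - 2 * θ := by
  have hBC : B ≠ C := dist_pos.1 ha
  have hBFC : ∠ B F C = π := hF ▸ angle_midpoint_eq_pi B C hBC
  have hBF : B ≠ F := fun h => hBC ((midpoint_eq_left_iff ℝ).1 (hF ▸ h).symm)
  have hABC : ∠ A B C = π / 2 - θ := by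
    have hsum := angle_add_angle_add_angle_eq_pi B (dist_pos.1 hb)
    rw [angle_comm C A B, ← hθ, angle_comm B C A, hC] at hsum
    linarith
  have hGBF : ∠ G B F = ∠ A B C := by
    rw [angle_eq_angle_of_angle_eq_pi G hBFC, hG]
    refine angle_orthogonalProjection_line_left ?_
    rw [angle_comm]
    exact angle_lt_pi_div_two_of_angle_eq_pi_div_two hC hBC
  have hFB : dist F B = dist F G := by
    have hBGC : ∠ B G C = π / 2 :=
      hG ▸ angle_orthogonalProjection_self C (right_mem_affineSpan_pair ℝ A B)
    rw [dist_comm F B, dist_comm F G, hF, dist_midpoint_eq_of_angle_eq_pi_div_two hBGC]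
  have hBFG : ∠ B F G = 2 * θ := by
    rw [angle_eq_pi_sub_two_mul_angle_of_dist_eq hFB hBF, angle_comm F B G, hGBF, hABC]
    ring
  refine ⟨hBFG, ?_⟩
  linarith [angle_add_angle_eq_pi_of_angle_eq_pi G hBFC, angle_comm G F B, angle_comm G F C]
end

section
/- Let E be the midpoint of segment AC and G the orthogonal projection of C onto line AB. Then the triangles AEG and CEG have equal area, namely area(AEG) = area(CEG) = a·b^3/(4·c^2). -/
/-!
Every triangle in the plane is the image of the standard triangle `0, e₀, e₁` under an affine map,
so its area is `|ω(q - p, r - p)| / 2` where `ω` is the area form; the standard triangle has area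
`1/2` because it and its reflection through the centre of the unit square tile the square.

With `u = A - C` and `v = B - C` orthogonal, `G - A = t (v - u)` where `t = b² / c²`, and
`E - A = -u / 2`, `E - C = u / 2`. Bilinearity gives `ω(E - A, G - A) = -(t/2) ω(u, v)` and
`ω(E - C, G - C) = (t/2) ω(u, v)`, while `|ω(u, v)| = ab` since `u ⊥ v`.
-/

open EuclideanGeometry MeasureTheory Set Module
open scoped Pointwise RealInnerProductSpace

local notation "E2" => EuclideanSpace ℝ (Fin 2)

theorem Module.Basis.det_constr {ι R M : Type*} [Fintype ι] [DecidableEq ι] [CommRing R]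
    [AddCommGroup M] [Module R M] (b : Basis ι R M) (v : ι → M) :
    LinearMap.det (b.constr ℕ v) = b.det v := by
  rw [b.det_apply, b.toMatrix_eq_toMatrix_constr, LinearMap.det_toMatrix]

theorem convexHull_zero_single_single :
    convexHull ℝ {0, EuclideanSpace.single 0 1, EuclideanSpace.single 1 1} =
      {x : E2 | 0 ≤ x 0 ∧ 0 ≤ x 1 ∧ x 0 + x 1 ≤ 1} := by
  apply Subset.antisymm
  · refine convexHull_min ?_ ?_
    · rintro x (rfl | rfl | rfl) <;> simp
    · rintro x ⟨hx0, hx1, hx⟩ y ⟨hy0, hy1, hy⟩ a b ha hb hab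
      simp only [mem_ofPred_eq, PiLp.add_apply, PiLp.smul_apply, smul_eq_mul]
      exact ⟨by positivity, by positivity, by nlinarith⟩
  · rintro x ⟨h0, h1, h01⟩
    have hx : x = ∑ i, ![1 - x 0 - x 1, x 0, x 1] i •
        ![0, EuclideanSpace.single 0 1, EuclideanSpace.single 1 1] i := by
      ext i; fin_cases i <;> simp [Fin.sum_univ_three]
    rw [hx]
    refine (convex_convexHull ℝ _).sum_mem (fun i _ => ?_) ?_ (fun i _ => subset_convexHull ℝ _ ?_)
    · fin_cases i <;> simp <;> linarith
    · simp [Fin.sum_univ_three]; ring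
    · fin_cases i <;> simp

theorem volume_setOf_add_eq_one : volume {x : E2 | x 0 + x 1 = 1} = 0 := by
  have mem_line (x : E2) :
      x ∈ line[ℝ, EuclideanSpace.single 0 1, EuclideanSpace.single 1 1] ↔ x 0 + x 1 = 1 := by
    rw [mem_affineSpan_pair_iff_exists_lineMap_eq]
    constructor
    · rintro ⟨r, rfl⟩
      simp [AffineMap.lineMap_apply_module]
    · intro hx
      refine ⟨x 1, ?_⟩
      ext i
      fin_cases i
      · simp [AffineMap.lineMap_apply_module]; linarith
      · simp [AffineMap.lineMap_apply_module]
  refine measure_mono_null (fun x hx => (mem_line x).2 hx) (Measure.addHaar_affineSubspace _ _ ?_)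
  intro htop
  simpa using (mem_line 0).1 (htop ▸ AffineSubspace.mem_top ℝ _ 0)

theorem volume_stdTriangle : volume {x : E2 | 0 ≤ x 0 ∧ 0 ≤ x 1 ∧ x 0 + x 1 ≤ 1} = 1 / 2 := by
  set T := {x : E2 | 0 ≤ x 0 ∧ 0 ≤ x 1 ∧ x 0 + x 1 ≤ 1}
  set T' : Set E2 := (fun x => WithLp.toLp 2 1 - x) ⁻¹' T
  have hT'_eq : T' = {x : E2 | x 0 ≤ 1 ∧ x 1 ≤ 1 ∧ 1 ≤ x 0 + x 1} := by
    ext x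
    simp only [T', T, mem_preimage, mem_ofPred_eq, PiLp.sub_apply, Pi.one_apply]
    constructor <;> rintro ⟨h0, h1, h2⟩ <;> refine ⟨?_, ?_, ?_⟩ <;> linarith
  have hvol_T' : volume T' = volume T := by
    have : T' = Neg.neg ⁻¹' ((WithLp.toLp 2 1 + ·) ⁻¹' T) := by
      ext; simp [T', sub_eq_add_neg]
    rw [this, Measure.measure_preimage_neg, measure_preimage_add]
  have hunion : T ∪ T' = WithLp.ofLp ⁻¹' Icc 0 1 := by
    ext x
    simp only [hT'_eq, T, mem_union, mem_ofPred_eq, mem_preimage, mem_Icc, Pi.le_def,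
      Fin.forall_fin_two, Pi.zero_apply, Pi.one_apply]
    constructor
    · rintro (⟨h0, h1, h2⟩ | ⟨h0, h1, h2⟩) <;> refine ⟨⟨?_, ?_⟩, ?_, ?_⟩ <;> linarith
    · rintro ⟨⟨h0, h1⟩, h2, h3⟩
      rcases le_total (x 0 + x 1) 1 with h | h
      exacts [Or.inl ⟨h0, h1, h⟩, Or.inr ⟨h2, h3, h⟩]
  have hinter : volume (T ∩ T') = 0 := by
    refine measure_mono_null (fun x ⟨hx, hx'⟩ => ?_) volume_setOf_add_eq_one
    rw [hT'_eq] at hx'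
    exact le_antisymm hx.2.2 hx'.2.2
  have hsquare : volume ((WithLp.ofLp : E2 → Fin 2 → ℝ) ⁻¹' Icc 0 1) = 1 := by
    rw [(PiLp.volume_preserving_ofLp _).measure_preimage measurableSet_Icc.nullMeasurableSet,
      Real.volume_Icc_pi]
    simp
  have hT'_meas : MeasurableSet T' := by
    rw [hT'_eq]
    measurability
  have h := measure_union_add_inter (μ := volume) T hT'_meas
  rw [hunion, hsquare, hinter, hvol_T', add_zero, ← two_mul] at h
  rw [ENNReal.eq_div_iff two_ne_zero ENNReal.ofNat_ne_top, ← h]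

instance : Fact (finrank ℝ E2 = 2) := ⟨finrank_euclideanSpace_fin⟩

theorem volume_convexHull_triangle (o : Orientation ℝ E2 (Fin 2)) (p q r : E2) :
    volume (convexHull ℝ {p, q, r}) = ENNReal.ofReal (|o.areaForm (q - p) (r - p)| / 2) := by
  set b := EuclideanSpace.basisFun (Fin 2) ℝ
  set f := b.toBasis.constr ℕ ![q - p, r - p]
  have hvertices : ({p, q, r} : Set E2) =
      p +ᵥ f '' {0, EuclideanSpace.single 0 1, EuclideanSpace.single 1 1} := by
    have hf (i : Fin 2) : f (EuclideanSpace.single i 1) = ![q - p, r - p] i := by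
      rw [← EuclideanSpace.basisFun_apply, ← b.coe_toBasis, b.toBasis.constr_basis]
    simp [image_insert_eq, hf, vadd_set_insert]
  have hdet : |LinearMap.det f| = |o.areaForm (q - p) (r - p)| := by
    rw [o.areaForm_to_volumeForm, o.volumeForm_robust' b, b.toBasis.det_constr]
  rw [hvertices, convexHull_vadd, measure_vadd, ← LinearMap.image_convexHull,
    Measure.addHaar_image_linearMap, convexHull_zero_single_single, volume_stdTriangle, hdet,
    ENNReal.ofReal_div_of_pos two_pos, ENNReal.ofReal_ofNat, one_div, div_eq_mul_inv]

theorem orthogonalProjection_affineSpan_pair {V P : Type*} [NormedAddCommGroup V]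
    [InnerProductSpace ℝ V] [MetricSpace P] [NormedAddTorsor V P] (A B C : P) :
    (orthogonalProjection line[ℝ, A, B] C : P) =
      (⟪B -ᵥ A, C -ᵥ A⟫ / ‖B -ᵥ A‖ ^ 2) • (B -ᵥ A) +ᵥ A := by
  rw [orthogonalProjection_apply_mem _ (left_mem_affineSpan_pair ℝ A B),
    Submodule.coe_orthogonalProjectionOnto_apply]
  congr 1
  have key : ∀ (K : Submodule ℝ V) [K.HasOrthogonalProjection], K = ℝ ∙ (B -ᵥ A) →
      K.starProjection (C -ᵥ A) = (⟪B -ᵥ A, C -ᵥ A⟫ / ‖B -ᵥ A‖ ^ 2) • (B -ᵥ A) := by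
    rintro K _ rfl
    simpa using Submodule.starProjection_singleton ℝ (C -ᵥ A)
  exact key _ (by rw [direction_affineSpan, vectorSpan_pair_rev])

theorem orthogonalProjection_affineSpan_pair_vsub_of_angle_eq_pi_div_two {V P : Type*}
    [NormedAddCommGroup V] [InnerProductSpace ℝ V] [MetricSpace P] [NormedAddTorsor V P]
    {A B C : P} (h : ∠ A C B = Real.pi / 2) :
    (orthogonalProjection line[ℝ, A, B] C : P) -ᵥ A = (dist A C ^ 2 / dist A B ^ 2) • (B -ᵥ A) := by
  have hinner : ⟪A -ᵥ C, B -ᵥ C⟫ = 0 :=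
    (InnerProductGeometry.inner_eq_zero_iff_angle_eq_pi_div_two _ _).2 h
  have hBCA : ⟪B -ᵥ A, C -ᵥ A⟫ = dist A C ^ 2 := by
    rw [← vsub_sub_vsub_cancel_right B A C, ← neg_vsub_eq_vsub_rev A C, inner_sub_left,
      inner_neg_right, inner_neg_right, real_inner_comm, hinner, real_inner_self_eq_norm_sq,
      dist_eq_norm_vsub V]
    ring
  rw [orthogonalProjection_affineSpan_pair, vadd_vsub, hBCA, ← dist_eq_norm_vsub' V]

theorem abs_areaForm_midpoint_orthogonalProjection {V : Type*} [NormedAddCommGroup V]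
    [InnerProductSpace ℝ V] [Fact (finrank ℝ V = 2)] (o : Orientation ℝ V (Fin 2)) {A B C : V}
    (h : ∠ A C B = Real.pi / 2) :
    |o.areaForm (midpoint ℝ A C - A) ((orthogonalProjection line[ℝ, A, B] C : V) - A)| =
        dist B C * dist A C ^ 3 / (2 * dist A B ^ 2) ∧
      |o.areaForm (midpoint ℝ A C - C) ((orthogonalProjection line[ℝ, A, B] C : V) - C)| =
        dist B C * dist A C ^ 3 / (2 * dist A B ^ 2) := by
  set G : V := (orthogonalProjection line[ℝ, A, B] C : V)
  set t := dist A C ^ 2 / dist A B ^ 2 with ht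
  have hperp : ⟪A - C, B - C⟫ = 0 :=
    (InnerProductGeometry.inner_eq_zero_iff_angle_eq_pi_div_two _ _).2 h
  have hGA : G - A = t • ((B - C) - (A - C)) := by
    rw [← vsub_eq_sub, orthogonalProjection_affineSpan_pair_vsub_of_angle_eq_pi_div_two h,
      vsub_eq_sub, sub_sub_sub_cancel_right]
  have hGC : G - C = (A - C) + t • ((B - C) - (A - C)) := by rw [← hGA, sub_add_sub_cancel']
  have hEA : midpoint ℝ A C - A = (-2⁻¹ : ℝ) • (A - C) := by
    rw [midpoint_eq_smul_add, invOf_eq_inv]; module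
  have hEC : midpoint ℝ A C - C = (2⁻¹ : ℝ) • (A - C) := by
    rw [midpoint_eq_smul_add, invOf_eq_inv]; module
  have hAEG : o.areaForm (midpoint ℝ A C - A) (G - A) = -(t / 2) * o.areaForm (A - C) (B - C) := by
    rw [hEA, hGA]
    generalize A - C = u; generalize B - C = v
    simp only [map_smul, map_sub, LinearMap.smul_apply, o.areaForm_apply_self, smul_eq_mul]
    ring
  have hCEG : o.areaForm (midpoint ℝ A C - C) (G - C) = t / 2 * o.areaForm (A - C) (B - C) := by
    rw [hEC, hGC]
    generalize A - C = u; generalize B - C = v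
    simp only [map_smul, map_add, map_sub, LinearMap.smul_apply, o.areaForm_apply_self,
      smul_eq_mul]
    ring
  have habs : |t / 2| * (‖A - C‖ * ‖B - C‖) = dist B C * dist A C ^ 3 / (2 * dist A B ^ 2) := by
    rw [abs_of_nonneg (by positivity), ht, ← dist_eq_norm, ← dist_eq_norm]
    ring
  rw [hAEG, hCEG, abs_mul, abs_mul, abs_neg, o.abs_areaForm_of_orthogonal hperp]
  exact ⟨habs, habs⟩

theorem area_AEG_CEG_general
    (A B C G E : EuclideanSpace ℝ (Fin 2))
    (hC : ∠ A C B = Real.pi / 2)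
    (hG : G = EuclideanGeometry.orthogonalProjection (affineSpan ℝ {A, B}) C)
    (hE : E = midpoint ℝ A C) :
    volume (convexHull ℝ ({A, E, G} : Set (EuclideanSpace ℝ (Fin 2))))
        = volume (convexHull ℝ ({C, E, G} : Set (EuclideanSpace ℝ (Fin 2)))) ∧
      volume (convexHull ℝ ({A, E, G} : Set (EuclideanSpace ℝ (Fin 2))))
        = ENNReal.ofReal (dist B C * (dist A C) ^ 3 / (4 * (dist A B) ^ 2)) := by
  set o : Orientation ℝ E2 (Fin 2) := (EuclideanSpace.basisFun (Fin 2) ℝ).toBasis.orientation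
  obtain ⟨hAEG, hCEG⟩ := abs_areaForm_midpoint_orthogonalProjection o hC
  rw [volume_convexHull_triangle o A, volume_convexHull_triangle o C, hG, hE, hAEG, hCEG]
  refine ⟨rfl, ?_⟩
  ring_nf

theorem area_AEG_CEG
    (A B C G E : EuclideanSpace ℝ (Fin 2))
    (hC : ∠ A C B = Real.pi / 2)
    (ha : 0 < dist B C) (hb : 0 < dist A C)
    (hG : G = EuclideanGeometry.orthogonalProjection (affineSpan ℝ {A, B}) C)
    (hE : E = midpoint ℝ A C) :
    volume (convexHull ℝ ({A, E, G} : Set (EuclideanSpace ℝ (Fin 2))))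
        = volume (convexHull ℝ ({C, E, G} : Set (EuclideanSpace ℝ (Fin 2)))) ∧
      volume (convexHull ℝ ({A, E, G} : Set (EuclideanSpace ℝ (Fin 2))))
        = ENNReal.ofReal (dist B C * (dist A C) ^ 3 / (4 * (dist A B) ^ 2)) :=
  area_AEG_CEG_general A B C G E hC hG hE
end

section
/- Let F be the midpoint of segment BC and G the orthogonal projection of C onto line AB. Then the triangles CFG and BFG have equal area, namely area(CFG) = area(BFG) = a^3·b/(4·c^2). -/
/-! A triangle and its point reflection through the midpoint of one side tile the parallelogram
on its two other sides, overlapping only along a segment; so the area of `{p, q, r}` is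
`|ω (q - p) (r - p)| / 2` for the area form `ω`. Hence moving a vertex `q` to `lineMap p q t`
multiplies the area by `t`. The median `GF` therefore halves triangle `BCG`, and since the foot
`G` lies on `BA` at parameter `⟪C - B, A - B⟫ / c² = a² / c²`, triangle `BCG` has `a² / c²` times
the area `ab / 2` of the right triangle `ABC`. -/

open EuclideanGeometry MeasureTheory Set Module Pointwise

theorem smul_add_smul_mem_convexHull_zero_pair {E : Type*} [AddCommGroup E] [Module ℝ E]
    {s t : ℝ} (hs : 0 ≤ s) (ht : 0 ≤ t) (hst : s + t ≤ 1) (x y : E) :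
    s • x + t • y ∈ convexHull ℝ {0, x, y} := by
  have hmem : ∀ i, ![0, x, y] i ∈ convexHull ℝ {0, x, y} := fun i =>
    subset_convexHull ℝ _ (by fin_cases i <;> simp)
  have := (convex_convexHull ℝ ({0, x, y} : Set E)).sum_mem (t := Finset.univ)
    (w := ![1 - s - t, s, t]) (z := ![0, x, y])
    (fun i _ => by fin_cases i <;> simp [hs, ht, show 0 ≤ 1 - s - t by linarith])
    (by simp only [Fin.sum_univ_three, Matrix.cons_val]; ring) (fun i _ => hmem i)
  simpa [Fin.sum_univ_three] using this

theorem mem_parallelepiped_pair {E : Type*} [AddCommGroup E] [Module ℝ E] {x y z : E} :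
    z ∈ parallelepiped ![x, y] ↔ ∃ s ∈ Icc (0 : ℝ) 1, ∃ t ∈ Icc (0 : ℝ) 1, z = s • x + t • y := by
  simp only [mem_parallelepiped_iff, Fin.sum_univ_two, Matrix.cons_val_zero, Matrix.cons_val_one]
  constructor
  · rintro ⟨t, ht, rfl⟩
    exact ⟨t 0, ⟨ht.1 0, ht.2 0⟩, t 1, ⟨ht.1 1, ht.2 1⟩, rfl⟩
  · rintro ⟨s, hs, t, ht, rfl⟩
    refine ⟨![s, t], ⟨?_, ?_⟩, by simp⟩ <;> intro i <;> fin_cases i <;>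
      simp [hs.1, hs.2, ht.1, ht.2]

theorem convexHull_zero_pair_subset_parallelepiped {E : Type*} [AddCommGroup E] [Module ℝ E]
    (x y : E) : convexHull ℝ {0, x, y} ⊆ parallelepiped ![x, y] := by
  refine convexHull_min ?_ (convex_parallelepiped _)
  simp only [insert_subset_iff, singleton_subset_iff, mem_parallelepiped_pair]
  exact ⟨⟨0, by simp, 0, by simp, by simp⟩, ⟨1, by simp, 0, by simp, by simp⟩,
    ⟨0, by simp, 1, by simp, by simp⟩⟩

theorem parallelepiped_pair_eq_union {E : Type*} [AddCommGroup E] [Module ℝ E] (x y : E) :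
    parallelepiped ![x, y] = convexHull ℝ {0, x, y} ∪ (x + y - ·) ⁻¹' convexHull ℝ {0, x, y} := by
  refine Subset.antisymm ?_ (union_subset (convexHull_zero_pair_subset_parallelepiped x y) ?_)
  · intro z hz
    obtain ⟨s, hs, t, ht, rfl⟩ := mem_parallelepiped_pair.mp hz
    by_cases hst : s + t ≤ 1
    · exact Or.inl (smul_add_smul_mem_convexHull_zero_pair hs.1 ht.1 hst x y)
    · right
      rw [mem_preimage, show x + y - (s • x + t • y) = (1 - s) • x + (1 - t) • y by module]
      exact smul_add_smul_mem_convexHull_zero_pair (by linarith [hs.2]) (by linarith [ht.2])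
        (by linarith) x y
  · intro z hz
    rw [mem_preimage] at hz
    obtain ⟨s, hs, t, ht, hst⟩ :=
      mem_parallelepiped_pair.mp (convexHull_zero_pair_subset_parallelepiped x y hz)
    refine mem_parallelepiped_pair.mpr ⟨1 - s, ⟨by linarith [hs.2], by linarith [hs.1]⟩,
      1 - t, ⟨by linarith [ht.2], by linarith [ht.1]⟩, ?_⟩
    rw [show z = x + y - (x + y - z) by abel, hst]
    module

section Oriented

variable {E : Type*} [NormedAddCommGroup E] [InnerProductSpace ℝ E] [Fact (finrank ℝ E = 2)]
  [MeasurableSpace E] [BorelSpace E] (o : Orientation ℝ E (Fin 2))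

attribute [local instance] FiniteDimensional.of_fact_finrank_eq_two

theorem Orientation.volume_parallelepiped_pair (x y : E) :
    volume (parallelepiped ![x, y]) = ENNReal.ofReal |o.areaForm x y| := by
  rw [← o.measure_eq_volume, AlternatingMap.measure_parallelepiped, o.areaForm_to_volumeForm]

theorem volume_convexHull_inter_preimage_sub_eq_zero (x y : E) :
    volume (convexHull ℝ {0, x, y} ∩ (x + y - ·) ⁻¹' convexHull ℝ {0, x, y}) = 0 := by
  let o : Orientation ℝ E (Fin 2) := (finBasisOfFinrankEq ℝ E Fact.out).orientation
  by_cases hc : o.areaForm x y = 0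
  · refine measure_mono_null ?_
      (by rw [o.volume_parallelepiped_pair, hc, abs_zero, ENNReal.ofReal_zero])
    rw [parallelepiped_pair_eq_union]
    exact inter_subset_left.trans subset_union_left
  set c := o.areaForm x y
  -- The level set `g = c * c` is the line through `x` and `y`; the triangle and its reflection
  -- lie on opposite sides of it.
  set g : E →ₗ[ℝ] ℝ := c • o.areaForm.flip (y - x)
  have hgx : g x = c * c := by simp [g, c]
  have hgy : g y = c * c := by simp [g, c, o.areaForm_swap y x]
  have hT : convexHull ℝ {0, x, y} ⊆ {z | g z ≤ c * c} := by
    refine convexHull_min ?_ (convex_halfSpace_le g.isLinear _)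
    simp only [insert_subset_iff, singleton_subset_iff, mem_ofPred_eq, map_zero, hgx, hgy]
    exact ⟨mul_self_nonneg c, le_rfl, le_rfl⟩
  refine measure_mono_null (t := AffineSubspace.mk' x (LinearMap.ker g)) ?_
    (Measure.addHaar_affineSubspace _ _ ?_)
  · rintro z ⟨hz, hσz⟩
    have h1 : g z ≤ c * c := hT hz
    have h2 : g (x + y - z) ≤ c * c := hT hσz
    rw [map_sub, map_add, hgx, hgy] at h2
    rw [SetLike.mem_coe, AffineSubspace.mem_mk', LinearMap.mem_ker, vsub_eq_sub, map_sub, hgx]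
    linarith
  · intro htop
    have h0 : (0 : E) ∈ AffineSubspace.mk' x (LinearMap.ker g) :=
      htop ▸ AffineSubspace.mem_top _ _ _
    rw [AffineSubspace.mem_mk', LinearMap.mem_ker, vsub_eq_sub, zero_sub, map_neg, hgx,
      neg_eq_zero, mul_self_eq_zero] at h0
    exact hc h0

theorem Orientation.volume_convexHull_zero_pair (x y : E) :
    volume (convexHull ℝ {0, x, y}) = ENNReal.ofReal (|o.areaForm x y| / 2) := by
  set T := convexHull ℝ ({0, x, y} : Set E)
  have hσ : MeasurePreserving (x + y - ·) (volume : Measure E) volume :=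
    Measure.measurePreserving_sub_left volume (x + y)
  have hT : MeasurableSet T := ((Set.toFinite _).isCompact_convexHull ℝ).isClosed.measurableSet
  have key := measure_union_add_inter (μ := volume) T (hσ.measurable hT)
  rw [← parallelepiped_pair_eq_union, volume_convexHull_inter_preimage_sub_eq_zero, add_zero,
    hσ.measure_preimage hT.nullMeasurableSet, o.volume_parallelepiped_pair, ← mul_two] at key
  rw [ENNReal.ofReal_div_of_pos two_pos, key, ENNReal.ofReal_ofNat,
    ENNReal.mul_div_cancel_right two_ne_zero ENNReal.ofNat_ne_top]

theorem Orientation.volume_convexHull_triple (p q r : E) :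
    volume (convexHull ℝ {p, q, r}) = ENNReal.ofReal (|o.areaForm (q - p) (r - p)| / 2) := by
  have : convexHull ℝ {p, q, r} = p +ᵥ convexHull ℝ {0, q - p, r - p} := by
    rw [← convexHull_vadd]
    simp [vadd_set_insert]
  rw [this, measure_vadd, o.volume_convexHull_zero_pair]

theorem volume_convexHull_lineMap {t : ℝ} (ht : 0 ≤ t) (p q r : E) :
    volume (convexHull ℝ {p, AffineMap.lineMap p q t, r}) =
      ENNReal.ofReal t * volume (convexHull ℝ {p, q, r}) := by
  let o : Orientation ℝ E (Fin 2) := (finBasisOfFinrankEq ℝ E Fact.out).orientation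
  rw [o.volume_convexHull_triple, o.volume_convexHull_triple, ← vsub_eq_sub,
    AffineMap.lineMap_vsub_left, vsub_eq_sub, map_smul, LinearMap.smul_apply, smul_eq_mul,
    abs_mul, abs_of_nonneg ht, mul_div_assoc, ENNReal.ofReal_mul ht]

theorem volume_convexHull_of_angle_eq_pi_div_two {p q r : E} (h : ∠ p q r = Real.pi / 2) :
    volume (convexHull ℝ {p, q, r}) = ENNReal.ofReal (dist p q * dist r q / 2) := by
  let o : Orientation ℝ E (Fin 2) := (finBasisOfFinrankEq ℝ E Fact.out).orientation
  have hpqr : inner ℝ (p - q) (r - q) = 0 :=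
    (InnerProductGeometry.inner_eq_zero_iff_angle_eq_pi_div_two _ _).mpr h
  rw [insert_comm, o.volume_convexHull_triple, o.abs_areaForm_of_orthogonal hpqr, dist_eq_norm,
    dist_eq_norm]

theorem volume_convexHull_midpoint (p q r : E) :
    volume (convexHull ℝ {p, midpoint ℝ p q, r}) =
      ENNReal.ofReal 2⁻¹ * volume (convexHull ℝ {p, q, r}) := by
  rw [midpoint, invOf_eq_inv, volume_convexHull_lineMap (by positivity)]

end Oriented

section Projection

variable {V P : Type*} [NormedAddCommGroup V] [InnerProductSpace ℝ V] [MetricSpace P]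
  [NormedAddTorsor V P]

theorem EuclideanGeometry.coe_orthogonalProjection_affineSpan_pair (A B C : P) :
    (orthogonalProjection line[ℝ, A, B] C : P) =
      AffineMap.lineMap A B (inner ℝ (C -ᵥ A) (B -ᵥ A) / ‖B -ᵥ A‖ ^ 2) := by
  rw [coe_orthogonalProjection_eq_iff_mem]
  refine ⟨AffineMap.lineMap_mem_affineSpan_pair _ _ _, ?_⟩
  rw [direction_affineSpan, vectorSpan_pair, Submodule.mem_orthogonal_singleton_iff_inner_right,
    AffineMap.lineMap_apply, vsub_vadd_eq_vsub_sub, ← neg_vsub_eq_vsub_rev B A, inner_neg_left,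
    inner_sub_right, inner_smul_right, real_inner_self_eq_norm_sq, real_inner_comm,
    div_mul_cancel_of_imp]
  · ring
  · intro h
    rw [norm_eq_zero.mp (pow_eq_zero_iff two_ne_zero |>.mp h), inner_zero_right]

end Projection

theorem area_CFG_BFG_general
    (A B C G F : EuclideanSpace ℝ (Fin 2))
    (hC : ∠ A C B = Real.pi / 2)
    (hG : G = EuclideanGeometry.orthogonalProjection (affineSpan ℝ {A, B}) C)
    (hF : F = midpoint ℝ B C) :
    volume (convexHull ℝ ({C, F, G} : Set (EuclideanSpace ℝ (Fin 2))))
        = volume (convexHull ℝ ({B, F, G} : Set (EuclideanSpace ℝ (Fin 2)))) ∧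
      volume (convexHull ℝ ({C, F, G} : Set (EuclideanSpace ℝ (Fin 2))))
        = ENNReal.ofReal ((dist B C) ^ 3 * dist A C / (4 * (dist A B) ^ 2)) := by
  have : Fact (finrank ℝ (EuclideanSpace ℝ (Fin 2)) = 2) := ⟨finrank_euclideanSpace_fin⟩
  have hCB : inner ℝ (C - B) (A - B) = dist B C ^ 2 := by
    have hAC : inner ℝ (A - C) (B - C) = 0 :=
      (InnerProductGeometry.inner_eq_zero_iff_angle_eq_pi_div_two _ _).mpr hC
    rw [show C - B = -(B - C) by abel, show A - B = (A - C) - (B - C) by abel, inner_neg_left,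
      inner_sub_right, real_inner_comm, hAC, real_inner_self_eq_norm_sq, dist_eq_norm]
    ring
  have hG' : G = AffineMap.lineMap B A (dist B C ^ 2 / dist A B ^ 2) := by
    rw [hG, orthogonalProjection_congr (congrArg (affineSpan ℝ) (pair_comm A B)) rfl,
      coe_orthogonalProjection_affineSpan_pair, vsub_eq_sub, vsub_eq_sub, hCB, dist_eq_norm A B]
  have hBCG : volume (convexHull ℝ {B, C, G}) =
      ENNReal.ofReal (dist B C ^ 2 / dist A B ^ 2) * ENNReal.ofReal (dist A C * dist B C / 2) := by
    rw [pair_comm, hG', volume_convexHull_lineMap (by positivity),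
      show ({B, A, C} : Set (EuclideanSpace ℝ (Fin 2))) = {A, C, B} by
        rw [insert_comm, pair_comm], volume_convexHull_of_angle_eq_pi_div_two hC]
  have hCFG : volume (convexHull ℝ {C, F, G}) =
      ENNReal.ofReal 2⁻¹ * volume (convexHull ℝ {B, C, G}) := by
    rw [hF, midpoint_comm, volume_convexHull_midpoint, insert_comm]
  have hBFG : volume (convexHull ℝ {B, F, G}) =
      ENNReal.ofReal 2⁻¹ * volume (convexHull ℝ {B, C, G}) := by
    rw [hF, volume_convexHull_midpoint]
  refine ⟨hCFG.trans hBFG.symm, ?_⟩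
  rw [hCFG, hBCG, ← ENNReal.ofReal_mul (by positivity), ← ENNReal.ofReal_mul (by positivity)]
  congr 1
  ring

theorem area_CFG_BFG
    (A B C G F : EuclideanSpace ℝ (Fin 2))
    (hC : ∠ A C B = Real.pi / 2)
    (ha : 0 < dist B C) (hb : 0 < dist A C)
    (hG : G = EuclideanGeometry.orthogonalProjection (affineSpan ℝ {A, B}) C)
    (hF : F = midpoint ℝ B C) :
    volume (convexHull ℝ ({C, F, G} : Set (EuclideanSpace ℝ (Fin 2))))
        = volume (convexHull ℝ ({B, F, G} : Set (EuclideanSpace ℝ (Fin 2)))) ∧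
      volume (convexHull ℝ ({C, F, G} : Set (EuclideanSpace ℝ (Fin 2))))
        = ENNReal.ofReal ((dist B C) ^ 3 * dist A C / (4 * (dist A B) ^ 2)) :=
  area_CFG_BFG_general A B C G F hC hG hF
end

section
/- (Region B) Let D be the midpoint of segment AB and θ = ∠ B A C. The circular segment of the circle with center D and radius c/2 cut off by the chord BC, on the side of line BC opposite to A — that is, the set of points x with dist x D ≤ c/2 lying on the opposite side of the line through B and C from A — has two-dimensional Lebesgue measure c^2·θ/4 − a·b/4. -/
/-!
Centre coordinates at the midpoint `D` of the hypotenuse, with first axis along the unit vector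
`v = (C - A) / b`. By Thales the circle of radius `c / 2` about `D` passes through `A`, `B`, `C`;
the chord `BC` is perpendicular to `v` at distance `b / 2` from `D`, and the side of `BC` away from
`A` is the half-plane `⟪v, x - D⟫ > b / 2`. So the region is the circular segment
`{x₁² + x₂² ≤ r², x₁ > b / 2}` with `r = c / 2`, whose area is
`∫_{b/2}^{r} 2 √(r² - t²) dt = r² arccos (b / c) - (b / 2) (a / 2)`,
and `arccos (b / c) = θ`.
-/

open EuclideanGeometry MeasureTheory
open Real Set Module
open scoped RealInnerProductSpace

theorem SameRay.mul_nonneg {R : Type*} [Field R] [LinearOrder R] [IsStrictOrderedRing R]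
    {a b : R} (h : SameRay R a b) : 0 ≤ a * b := by
  rcases h with rfl | rfl | ⟨r₁, r₂, h₁, h₂, h⟩
  · rw [zero_mul]
  · rw [mul_zero]
  · simp only [smul_eq_mul] at h
    have : 0 ≤ r₁ * (a * b) := by
      rw [← mul_assoc, h, mul_assoc]
      exact _root_.mul_nonneg h₂.le (mul_self_nonneg b)
    exact nonneg_of_mul_nonneg_right (by linarith) h₁

namespace AffineSubspace

variable {R V P : Type*} [Field R] [LinearOrder R] [IsStrictOrderedRing R] [AddCommGroup V]
  [Module R V] [AddTorsor V P]

theorem sOppSide_iff_mul_neg_of_mem_iff {s : AffineSubspace R P} {p : P} {ℓ : V →ₗ[R] R}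
    (hs : ∀ y, y ∈ s ↔ ℓ (y -ᵥ p) = 0) {x y : P} :
    s.SOppSide x y ↔ ℓ (x -ᵥ p) * ℓ (y -ᵥ p) < 0 := by
  have hp : p ∈ s := (hs p).2 (by simp)
  constructor
  · intro h
    obtain ⟨hx, hy, q, hq, hray⟩ := (sOppSide_iff_exists_left hp).1 h
    have hmul := (hray.map ℓ).mul_nonneg
    rw [← vsub_sub_vsub_cancel_right q y p, map_sub, (hs q).1 hq] at hmul
    have hx' : ℓ (x -ᵥ p) ≠ 0 := fun h => hx ((hs x).2 h)
    have hy' : ℓ (y -ᵥ p) ≠ 0 := fun h => hy ((hs y).2 h)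
    exact (mul_ne_zero hx' hy').lt_of_le (by nlinarith)
  · intro h
    set a := ℓ (x -ᵥ p)
    set b := ℓ (y -ᵥ p)
    have hab : a - b ≠ 0 := by
      intro h'
      rw [sub_eq_zero.1 h'] at h
      nlinarith [sq_nonneg b]
    -- `q` is where the segment from `x` to `y` crosses the hyperplane `ℓ = 0`
    set t := a / (a - b)
    let q := t • (y -ᵥ x) +ᵥ x
    have hq : q ∈ s := by
      rw [hs, vadd_vsub_assoc, map_add, map_smul, ← vsub_sub_vsub_cancel_right y x p, map_sub]
      simp only [smul_eq_mul, t]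
      field_simp
      ring
    refine sOppSide_of_vsub_eq_smul hq hq (c₁ := -t) (c₂ := 1 - t) (m := y -ᵥ x)
      ?_ ?_ ?_ ?_ ?_
    · rw [vsub_vadd_eq_vsub_sub, vsub_self, zero_sub, neg_smul]
    · rw [vsub_vadd_eq_vsub_sub, sub_smul, one_smul]
    · have : -t * (1 - t) = a * b / (a - b) ^ 2 := by
        simp only [t]
        field_simp
        ring
      rw [this]
      exact div_nonpos_of_nonpos_of_nonneg h.le (sq_nonneg _)
    · exact fun hx => h.ne (by simp [a, (hs x).1 hx])
    · exact fun hy => h.ne (by simp [b, (hs y).1 hy])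

end AffineSubspace

theorem mem_affineSpan_pair_iff_inner_vsub_eq_zero {V P : Type*} [NormedAddCommGroup V]
    [InnerProductSpace ℝ V] [AddTorsor V P] (hV : finrank ℝ V = 2) {p q : P} {n : V}
    (hpq : p ≠ q) (hn : n ≠ 0) (h : ⟪n, q -ᵥ p⟫ = 0) (y : P) :
    y ∈ line[ℝ, p, q] ↔ ⟪n, y -ᵥ p⟫ = 0 := by
  have : FiniteDimensional ℝ V := Module.finite_of_finrank_eq_succ hV
  have : Fact (finrank ℝ V = 1 + 1) := ⟨hV⟩
  have hspan : ℝ ∙ (q -ᵥ p) = (ℝ ∙ n)ᗮ := by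
    refine Submodule.eq_of_le_of_finrank_eq ?_ ?_
    · rwa [Submodule.span_singleton_le_iff_mem, Submodule.mem_orthogonal_singleton_iff_inner_right]
    · rw [finrank_span_singleton (vsub_ne_zero.2 hpq.symm),
        Submodule.finrank_orthogonal_span_singleton (n := 1) hn]
  rw [← AffineSubspace.vsub_right_mem_direction_iff_mem (left_mem_affineSpan_pair ℝ p q),
    direction_affineSpan, vectorSpan_pair_rev, hspan,
    Submodule.mem_orthogonal_singleton_iff_inner_right]

theorem integral_two_mul_sqrt_sq_sub_sq {r d : ℝ} (hr : 0 < r) (hd₁ : -r ≤ d)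
    (hd₂ : d ≤ r) :
    ∫ t in d..r, 2 * √(r ^ 2 - t ^ 2) = r ^ 2 * arccos (d / r) - d * √(r ^ 2 - d ^ 2) := by
  have hderiv (t : ℝ) (ht : t ∈ Ioo d r) :
      HasDerivAt (fun t => t * √(r ^ 2 - t ^ 2) + r ^ 2 * arcsin (t / r))
        (2 * √(r ^ 2 - t ^ 2)) t := by
    obtain ⟨ht₁, ht₂⟩ := ht
    have hpos : 0 < r ^ 2 - t ^ 2 := by nlinarith
    have hsqrt : HasDerivAt (fun t => √(r ^ 2 - t ^ 2))
        (-(2 * t) / (2 * √(r ^ 2 - t ^ 2))) t := by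
      convert ((hasDerivAt_pow 2 t).const_sub (r ^ 2)).sqrt hpos.ne' using 1
      simp
    have harcsin : HasDerivAt (fun t => arcsin (t / r)) (1 / √(1 - (t / r) ^ 2) * (1 / r)) t :=
      (hasDerivAt_arcsin (by rw [ne_eq, div_eq_iff hr.ne']; linarith)
        (by rw [ne_eq, div_eq_iff hr.ne']; linarith)).comp t ((hasDerivAt_id t).div_const r)
    refine (((hasDerivAt_id' t).mul hsqrt).add (harcsin.const_mul (r ^ 2))).congr_deriv ?_
    have hs : √(1 - (t / r) ^ 2) = √(r ^ 2 - t ^ 2) / r := by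
      rw [show 1 - (t / r) ^ 2 = (r ^ 2 - t ^ 2) / r ^ 2 by field_simp,
        sqrt_div' _ (sq_nonneg r), sqrt_sq hr.le]
    have hsq := sq_sqrt hpos.le
    have hs0 := sqrt_pos.2 hpos
    rw [hs]
    field_simp
    nlinarith
  rw [intervalIntegral.integral_eq_sub_of_hasDerivAt_of_le hd₂ (by fun_prop) hderiv
    ((by fun_prop : Continuous fun t : ℝ => 2 * √(r ^ 2 - t ^ 2)).intervalIntegrable _ _),
    arccos_eq_pi_div_two_sub_arcsin, div_self hr.ne', arcsin_one]
  simp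
  ring

theorem setOf_sq_add_sq_lt_and_lt_fst_eq_regionBetween {r : ℝ} (hr : 0 ≤ r) (d : ℝ) :
    {p : ℝ × ℝ | p.1 ^ 2 + p.2 ^ 2 < r ^ 2 ∧ d < p.1} =
      regionBetween (fun t => -√(r ^ 2 - t ^ 2)) (fun t => √(r ^ 2 - t ^ 2)) (Ioo d r) := by
  ext ⟨t, y⟩
  simp only [regionBetween, mem_ofPred_eq, mem_Ioo, ← Real.sq_lt]
  constructor
  · rintro ⟨h, hd⟩
    exact ⟨⟨hd, (abs_lt_of_sq_lt_sq' (by nlinarith) hr).2⟩, by linarith⟩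
  · rintro ⟨⟨hd, -⟩, h⟩
    exact ⟨by linarith, hd⟩

theorem volume_setOf_sq_add_sq_lt_and_lt_fst {r d : ℝ} (hr : 0 ≤ r) (hd : d ≤ r) :
    volume {p : ℝ × ℝ | p.1 ^ 2 + p.2 ^ 2 < r ^ 2 ∧ d < p.1} =
      ENNReal.ofReal (∫ t in d..r, 2 * √(r ^ 2 - t ^ 2)) := by
  have hint : IntegrableOn (fun t => √(r ^ 2 - t ^ 2)) (Ioo d r) :=
    (by fun_prop : Continuous fun t : ℝ => √(r ^ 2 - t ^ 2)).integrableOn_Icc.mono_set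
      Ioo_subset_Icc_self
  rw [setOf_sq_add_sq_lt_and_lt_fst_eq_regionBetween hr, Measure.volume_eq_prod,
    volume_regionBetween_eq_integral (f := fun t => -√(r ^ 2 - t ^ 2)) hint.neg hint
      measurableSet_Ioo (fun t _ => neg_le_self (sqrt_nonneg _)),
    intervalIntegral.integral_of_le hd, ← integral_Ioc_eq_integral_Ioo]
  congr 2 with t
  simp only [Pi.sub_apply]
  ring

section InnerProductSpace

variable {F : Type*} [NormedAddCommGroup F] [InnerProductSpace ℝ F] [FiniteDimensional ℝ F]

theorem exists_orthonormalBasis_apply_zero_eq (hF : finrank ℝ F = 2) {v : F} (hv : ‖v‖ = 1) :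
    ∃ b : OrthonormalBasis (Fin 2) ℝ F, b 0 = v := by
  obtain ⟨b, hb⟩ := Orthonormal.exists_orthonormalBasis_extension_of_card_eq (𝕜 := ℝ)
    (v := fun _ : Fin 2 => v) (s := {0}) (by simpa using hF) (by simp [hv])
  exact ⟨b, hb 0 rfl⟩

def circularSegment (c v : F) (r d : ℝ) : Set F :=
  {x | dist x c ≤ r ∧ d < ⟪v, x - c⟫}

variable [MeasurableSpace F] [BorelSpace F]

theorem volume_circularSegment_eq_volume_ball_inter (hF : finrank ℝ F = 2) (c v : F) (r d : ℝ) :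
    volume (circularSegment c v r d) = volume {x : F | ‖x‖ < r ∧ d < ⟪v, x⟫} := by
  have : Nontrivial F := Module.nontrivial_of_finrank_eq_succ hF
  have htrans :
      circularSegment c v r d = (· + -c) ⁻¹' {x : F | ‖x‖ ≤ r ∧ d < ⟪v, x⟫} := by
    ext x
    simp [circularSegment, dist_eq_norm, sub_eq_add_neg]
  rw [htrans, measure_preimage_add_right]
  refine le_antisymm ?_ (measure_mono fun x hx => ⟨hx.1.le, hx.2⟩)
  calc volume {x : F | ‖x‖ ≤ r ∧ d < ⟪v, x⟫}
      ≤ volume ({x : F | ‖x‖ < r ∧ d < ⟪v, x⟫} ∪ Metric.sphere 0 r) := by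
        refine measure_mono fun x ⟨hle, hd⟩ => ?_
        rcases hle.lt_or_eq with hlt | heq
        · exact Or.inl ⟨hlt, hd⟩
        · exact Or.inr (by simpa using heq)
    _ ≤ volume {x : F | ‖x‖ < r ∧ d < ⟪v, x⟫} + volume (Metric.sphere (0 : F) r) :=
        measure_union_le _ _
    _ = volume {x : F | ‖x‖ < r ∧ d < ⟪v, x⟫} := by
        rw [Measure.addHaar_sphere, add_zero]

theorem volume_setOf_norm_lt_and_lt_inner (hF : finrank ℝ F = 2) {v : F} (hv : ‖v‖ = 1)
    {r : ℝ} (hr : 0 ≤ r) (d : ℝ) :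
    volume {x : F | ‖x‖ < r ∧ d < ⟪v, x⟫} =
      volume {p : ℝ × ℝ | p.1 ^ 2 + p.2 ^ 2 < r ^ 2 ∧ d < p.1} := by
  obtain ⟨b, hb⟩ := exists_orthonormalBasis_apply_zero_eq hF hv
  let e : F → ℝ × ℝ := fun x => MeasurableEquiv.finTwoArrow (b.repr x).ofLp
  have he : MeasurePreserving e := by
    have h := measurePreserving_finTwoArrow (volume : Measure ℝ)
    rw [← volume_pi, ← Measure.volume_eq_prod] at h
    exact h.comp ((PiLp.volume_preserving_ofLp _).comp b.measurePreserving_repr)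
  have hnorm (x : F) : ‖x‖ ^ 2 = (e x).1 ^ 2 + (e x).2 ^ 2 := by
    rw [← b.repr.norm_map, EuclideanSpace.real_norm_sq_eq, Fin.sum_univ_two]
    rfl
  have hfst (x : F) : (e x).1 = ⟪v, x⟫ := by
    rw [← hb, ← b.repr_apply_apply]
    rfl
  have hset : {x : F | ‖x‖ < r ∧ d < ⟪v, x⟫} =
      e ⁻¹' {p : ℝ × ℝ | p.1 ^ 2 + p.2 ^ 2 < r ^ 2 ∧ d < p.1} := by
    ext x
    simp only [mem_ofPred_eq, mem_preimage]
    rw [← hnorm, sq_lt_sq₀ (norm_nonneg x) hr, hfst]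
  rw [hset, he.measure_preimage]
  exact (measurableSet_lt (f := fun p : ℝ × ℝ => p.1 ^ 2 + p.2 ^ 2) (by fun_prop)
    (by fun_prop)).inter (measurableSet_lt measurable_const measurable_fst) |>.nullMeasurableSet

theorem volume_circularSegment (hF : finrank ℝ F = 2) (c : F) {v : F} (hv : ‖v‖ = 1)
    {r d : ℝ} (hr : 0 < r) (hd₁ : -r ≤ d) (hd₂ : d ≤ r) :
    volume (circularSegment c v r d) =
      ENNReal.ofReal (r ^ 2 * arccos (d / r) - d * √(r ^ 2 - d ^ 2)) := by
  rw [volume_circularSegment_eq_volume_ball_inter hF,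
    volume_setOf_norm_lt_and_lt_inner hF hv hr.le, volume_setOf_sq_add_sq_lt_and_lt_fst hr.le hd₂,
    integral_two_mul_sqrt_sq_sub_sq hr hd₁ hd₂]

end InnerProductSpace

section RightTriangle

variable {F : Type*} [NormedAddCommGroup F] [InnerProductSpace ℝ F] {A B C : F}

theorem sOppSide_affineSpan_pair_iff_inner_sub_neg (hF : finrank ℝ F = 2)
    (hC : ∠ A C B = π / 2) (hAC : A ≠ C) (hBC : B ≠ C) (x : F) :
    line[ℝ, B, C].SOppSide x A ↔ ⟪A - C, x - C⟫ < 0 := by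
  have hline := mem_affineSpan_pair_iff_inner_vsub_eq_zero hF hBC.symm (sub_ne_zero.2 hAC)
    ((InnerProductGeometry.inner_eq_zero_iff_angle_eq_pi_div_two _ _).2 hC)
  rw [Set.pair_comm,
    AffineSubspace.sOppSide_iff_mul_neg_of_mem_iff (ℓ := innerₛₗ ℝ (A - C)) hline]
  have hpos : 0 < ⟪A - C, A - C⟫ := real_inner_self_pos.2 (sub_ne_zero.2 hAC)
  simp only [innerₛₗ_apply_apply, vsub_eq_sub]
  exact ⟨fun h => neg_of_mul_neg_left h hpos.le, fun h => mul_neg_of_neg_of_pos h hpos⟩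

theorem inner_sub_midpoint_of_angle_eq_pi_div_two (hC : ∠ A C B = π / 2) (x : F) :
    ⟪C - A, x - midpoint ℝ A B⟫ = dist A C ^ 2 / 2 - ⟪A - C, x - C⟫ := by
  have hperp : ⟪A - C, B - C⟫ = 0 :=
    (InnerProductGeometry.inner_eq_zero_iff_angle_eq_pi_div_two _ _).2 hC
  have hx : x - midpoint ℝ A B = (x - C) - (2⁻¹ : ℝ) • ((A - C) + (B - C)) := by
    rw [midpoint_eq_smul_add, invOf_eq_inv]
    module
  rw [hx, ← neg_sub A C, inner_neg_left, inner_sub_right, real_inner_smul_right, inner_add_right,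
    hperp, real_inner_self_eq_norm_sq, ← dist_eq_norm]
  ring

theorem setOf_dist_le_and_sOppSide_eq_circularSegment (hF : finrank ℝ F = 2)
    (hC : ∠ A C B = π / 2) (hAC : A ≠ C) (hBC : B ≠ C) (r : ℝ) :
    {x | dist x (midpoint ℝ A B) ≤ r ∧ line[ℝ, B, C].SOppSide x A} =
      circularSegment (midpoint ℝ A B) ((dist A C)⁻¹ • (C - A)) r (dist A C / 2) := by
  have hb : 0 < dist A C := dist_pos.2 hAC
  ext x
  simp only [circularSegment, mem_ofPred_eq,
    sOppSide_affineSpan_pair_iff_inner_sub_neg hF hC hAC hBC, real_inner_smul_left,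
    inner_sub_midpoint_of_angle_eq_pi_div_two hC]
  refine and_congr_right fun _ => ?_
  rw [← div_eq_inv_mul, lt_div_iff₀ hb]
  constructor <;> intro h <;> linarith

end RightTriangle

theorem region_B_area
    (A B C D : EuclideanSpace ℝ (Fin 2))
    (hC : ∠ A C B = Real.pi / 2)
    (ha : 0 < dist B C) (hb : 0 < dist A C)
    (hD : D = midpoint ℝ A B)
    (θ : ℝ) (hθ : θ = ∠ B A C) :
    volume {x : EuclideanSpace ℝ (Fin 2) |
        dist x D ≤ dist A B / 2 ∧ (affineSpan ℝ {B, C}).SOppSide x A}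
      = ENNReal.ofReal ((dist A B) ^ 2 * θ / 4 - dist B C * dist A C / 4) := by
  subst hD hθ
  have hF : finrank ℝ (EuclideanSpace ℝ (Fin 2)) = 2 := finrank_euclideanSpace_fin
  have hpyth : dist A B ^ 2 = dist A C ^ 2 + dist B C ^ 2 := by
    linear_combination (dist_sq_eq_dist_sq_add_dist_sq_iff_angle_eq_pi_div_two A C B).2 hC
  have hAC_le_AB : dist A C ≤ dist A B := by nlinarith [dist_nonneg (x := A) (y := B)]
  have hv : ‖(dist A C)⁻¹ • (C - A)‖ = 1 := by
    rw [norm_smul, norm_inv, norm_of_nonneg hb.le, ← dist_eq_norm, dist_comm C A,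
      inv_mul_cancel₀ hb.ne']
  have hsqrt : √((dist A B / 2) ^ 2 - (dist A C / 2) ^ 2) = dist B C / 2 := by
    rw [show (dist A B / 2) ^ 2 - (dist A C / 2) ^ 2 = (dist B C / 2) ^ 2 by
        linear_combination hpyth / 4,
      sqrt_sq (by positivity)]
  rw [setOf_dist_le_and_sOppSide_eq_circularSegment hF hC (dist_pos.1 hb) (dist_pos.1 ha),
    volume_circularSegment hF _ hv (by linarith) (by linarith) (by linarith), hsqrt,
    div_div_div_cancel_right₀ two_ne_zero, angle_comm,
    angle_eq_arccos_of_angle_eq_pi_div_two (by rwa [angle_comm]), dist_comm B A]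
  ring_nf
end
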